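/- Let S = {a₁,a₂} × {b₁,b₂} be the 2×2 rectangular band and F a field. The augmentation ideal F[ω_S] = {Σ α_{ij}(a_i,b_j) : Σ α_{ij} = 0} is the unique maximal two-sided ideal of F[S]; that is, every proper ideal of F[S] is contained in F[ω_S]. -/

import Mathlib

inductive L2 : Type | a1 | a2
deriving DecidableEq

instance : Fintype L2 := ⟨{L2.a1, L2.a2}, fun x => by cases x <;> simp⟩

instance : Semigroup L2 where
  mul x _ := x
  mul_assoc _ _ _ := rfl

inductive R2 : Type | b1 | b2
deriving DecidableEq

instance : Fintype R2 := ⟨{R2.b1, R2.b2}, fun x => by cases x <;> simp⟩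

instance : Semigroup R2 where
  mul _ y := y
  mul_assoc _ _ _ := rfl

abbrev RB : Type := L2 × R2

def IsTwoSidedIdeal {F A : Type*} [Field F] [NonUnitalNonAssocSemiring A]
    [Module F A] (J : Submodule F A) : Prop :=
  ∀ a x : A, x ∈ J → a * x ∈ J ∧ x * a ∈ J

variable (F : Type*) [Field F]

/-- The sum-of-coefficients (augmentation) linear map on `F[S]`. -/
noncomputable def coeffSum : MonoidAlgebra F RB →ₗ[F] F where
  toFun x := ∑ s : RB, x.coeff s
  map_add' x y := by
    simp only [show ∀ s, (x + y).coeff s = x.coeff s + y.coeff s from fun _ => rfl, Finset.sum_add_distrib]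
  map_smul' c x := by
    simp only [show ∀ s, (c • x).coeff s = c * x.coeff s from fun _ => rfl, Finset.mul_sum,
      RingHom.id_apply, smul_eq_mul]

/-- `J_L`: the kernel of the map `F[S] → F[L]` induced by the projection. -/
noncomputable def JL : Submodule F (MonoidAlgebra F RB) :=
  LinearMap.ker (Finsupp.lmapDomain F F (Prod.fst : RB → L2) ∘ₗ
    (MonoidAlgebra.coeffLinearEquiv F).toLinearMap)

/-- `J_R`: the kernel of the map `F[S] → F[R]` induced by the projection. -/
noncomputable def JR : Submodule F (MonoidAlgebra F RB) :=
  LinearMap.ker (Finsupp.lmapDomain F F (Prod.snd : RB → R2) ∘ₗ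
    (MonoidAlgebra.coeffLinearEquiv F).toLinearMap)

/-- The element `C = (a₁,b₁) − (a₁,b₂) − (a₂,b₁) + (a₂,b₂)`. -/
noncomputable def Celt : MonoidAlgebra F RB :=
  MonoidAlgebra.single (L2.a1, R2.b1) 1 - MonoidAlgebra.single (L2.a1, R2.b2) 1
    - MonoidAlgebra.single (L2.a2, R2.b1) 1 + MonoidAlgebra.single (L2.a2, R2.b2) 1

/-! For `x ∈ F[S]` and basis elements `(a, b)`, `(c, d)` one has `(a, b) x (c, d) = ε(x) (a, d)`,
since the band product keeps only the outer coordinates. So a two-sided ideal containing an element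
of nonzero augmentation `ε(x)` contains every basis element and is everything, while `ε` is
multiplicative, so its kernel is a proper two-sided ideal. -/

theorem isTwoSidedIdeal_ker_of_map_mul {F A : Type*} [Field F] [NonUnitalNonAssocSemiring A]
    [Module F A] (f : A →ₗ[F] F) (hf : ∀ x y, f (x * y) = f x * f y) :
    IsTwoSidedIdeal (LinearMap.ker f) := by
  intro a x hx
  rw [LinearMap.mem_ker] at hx
  simp [hf, hx]

lemma coeffSum_single (s : RB) (r : F) : coeffSum F (MonoidAlgebra.single s r) = r := by
  simp [coeffSum, MonoidAlgebra.coeff_single, Finsupp.single_apply]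

lemma coeffSum_mul (x y : MonoidAlgebra F RB) :
    coeffSum F (x * y) = coeffSum F x * coeffSum F y := by
  induction x using MonoidAlgebra.induction_linear with
  | zero => simp
  | add f g hf hg => rw [add_mul, map_add, hf, hg, map_add, add_mul]
  | single s r =>
    induction y using MonoidAlgebra.induction_linear with
    | zero => simp
    | add f g hf hg => rw [mul_add, map_add, hf, hg, map_add, mul_add]
    | single t q => rw [MonoidAlgebra.single_mul_single, coeffSum_single, coeffSum_single,
        coeffSum_single]

lemma coeffSum_ne_zero : coeffSum F ≠ 0 := fun h => by
  simpa [coeffSum_single] using LinearMap.congr_fun h (MonoidAlgebra.single (L2.a1, R2.b1) 1)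

lemma single_mul_mul_single (a c : L2) (b d : R2) (x : MonoidAlgebra F RB) :
    MonoidAlgebra.single (a, b) (1 : F) * x * MonoidAlgebra.single (c, d) 1
      = coeffSum F x • MonoidAlgebra.single (a, d) 1 := by
  induction x using MonoidAlgebra.induction_linear with
  | zero => simp
  | add f g hf hg => rw [mul_add, add_mul, hf, hg, map_add, add_smul]
  | single s r =>
    rw [MonoidAlgebra.single_mul_single, MonoidAlgebra.single_mul_single, coeffSum_single,
      MonoidAlgebra.smul_single, smul_eq_mul, mul_one, one_mul, mul_one]
    rfl

lemma IsTwoSidedIdeal.single_mem {J : Submodule F (MonoidAlgebra F RB)} (hJ : IsTwoSidedIdeal J)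
    {x : MonoidAlgebra F RB} (hx : x ∈ J) (hεx : coeffSum F x ≠ 0) (s : RB) (r : F) :
    MonoidAlgebra.single s r ∈ J := by
  have hsandwich := (hJ (MonoidAlgebra.single (L2.a1, s.2) 1) _
    (hJ (MonoidAlgebra.single (s.1, R2.b1) 1) x hx).1).2
  rw [single_mul_mul_single] at hsandwich
  simpa [smul_smul, hεx] using J.smul_mem (r * (coeffSum F x)⁻¹) hsandwich

lemma IsTwoSidedIdeal.eq_top_of_coeffSum_ne_zero {J : Submodule F (MonoidAlgebra F RB)}
    (hJ : IsTwoSidedIdeal J) {x : MonoidAlgebra F RB} (hx : x ∈ J) (hεx : coeffSum F x ≠ 0) :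
    J = ⊤ := by
  rw [Submodule.eq_top_iff']
  intro y
  induction y using MonoidAlgebra.induction_linear with
  | zero => exact J.zero_mem
  | add f g hf hg => exact J.add_mem hf hg
  | single s r => exact hJ.single_mem F hx hεx s r

/-- The augmentation ideal (kernel of the coefficient-sum map) is the unique
maximal two-sided ideal of the semigroup algebra of the 2x2 rectangular band:
it is a proper two-sided ideal containing every proper two-sided ideal. -/
theorem augmentation_unique_maximal_ideal :
    IsTwoSidedIdeal (LinearMap.ker (coeffSum F)) ∧
    LinearMap.ker (coeffSum F) ≠ ⊤ ∧
    ∀ J : Submodule F (MonoidAlgebra F RB),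
      IsTwoSidedIdeal J → J ≠ ⊤ → J ≤ LinearMap.ker (coeffSum F) := by
  refine ⟨isTwoSidedIdeal_ker_of_map_mul _ (coeffSum_mul F), ?_, ?_⟩
  · exact fun h => coeffSum_ne_zero F (LinearMap.ker_eq_top.mp h)
  · intro J hJ hJtop x hx
    by_contra hεx
    exact hJtop (hJ.eq_top_of_coeffSum_ne_zero F hx hεx)
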